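/- arXiv:1501.04989 — 2 statements merged into one kernel-verified Lean document; each statement's English description precedes it below -/
import Mathlib

section
/- Let f : [−1,1] → ℝ be continuously differentiable on [−1,1], twice differentiable on (−1,1), with (1−t²)·f''(t) − 4t·f'(t) = 0 for all t ∈ (−1,1). Then f is constant. -/
/-! The weighted derivative `(1 - t²)² f'` has derivative `(1 - t²)` times the left side of the
equation, so it is constant on `[-1, 1]`. Being continuous, it vanishes at the endpoint `t = 1`,
hence everywhere; therefore `f' = 0` on `(-1, 1)` and `f` is constant. -/

open Set

theorem Convex.is_const_of_hasDerivAt_zero_interior {D : Set ℝ} (hD : Convex ℝ D) {g : ℝ → ℝ}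
    (hcont : ContinuousOn g D) (hderiv : ∀ x ∈ interior D, HasDerivAt g 0 x)
    {x y : ℝ} (hx : x ∈ D) (hy : y ∈ D) : g x = g y := by
  have hderiv' : ∀ x ∈ interior D, HasDerivWithinAt g 0 (interior D) x :=
    fun x hx ↦ (hderiv x hx).hasDerivWithinAt
  have hmono := monotoneOn_of_hasDerivWithinAt_nonneg hD hcont hderiv' fun _ _ ↦ le_rfl
  have hanti := antitoneOn_of_hasDerivWithinAt_nonpos hD hcont hderiv' fun _ _ ↦ le_rfl
  rcases le_total x y with hxy | hyx
  · exact le_antisymm (hmono hx hy hxy) (hanti hx hy hxy)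
  · exact le_antisymm (hanti hy hx hyx) (hmono hy hx hyx)

theorem is_const_Icc_of_hasDerivAt_zero_Ioo {g : ℝ → ℝ} {a b : ℝ}
    (hcont : ContinuousOn g (Icc a b)) (hderiv : ∀ x ∈ Ioo a b, HasDerivAt g 0 x)
    {x y : ℝ} (hx : x ∈ Icc a b) (hy : y ∈ Icc a b) : g x = g y :=
  (convex_Icc a b).is_const_of_hasDerivAt_zero_interior hcont (by rwa [interior_Icc]) hx hy

theorem hasDerivAt_one_sub_sq_sq_mul {u u' : ℝ → ℝ} {t : ℝ} (hu : HasDerivAt u (u' t) t) :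
    HasDerivAt (fun s ↦ (1 - s ^ 2) ^ 2 * u s)
      ((1 - t ^ 2) * ((1 - t ^ 2) * u' t - 4 * t * u t)) t := by
  have hw : HasDerivAt (fun s : ℝ ↦ 1 - s ^ 2) (-(2 * t)) t := by
    simpa using (hasDerivAt_pow 2 t).const_sub 1
  refine ((hw.pow 2).mul hu).congr_deriv ?_
  push_cast [Pi.pow_apply]
  ring

theorem stmt_5 (f f' f'' : ℝ → ℝ)
    (hf : ∀ t ∈ Set.Icc (-1:ℝ) 1, HasDerivAt f (f' t) t)
    (hf'cont : ContinuousOn f' (Set.Icc (-1:ℝ) 1))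
    (hf' : ∀ t ∈ Set.Ioo (-1:ℝ) 1, HasDerivAt f' (f'' t) t)
    (hode : ∀ t ∈ Set.Ioo (-1:ℝ) 1, (1 - t ^ 2) * f'' t - 4 * t * f' t = 0) :
    ∀ s ∈ Set.Icc (-1:ℝ) 1, ∀ t ∈ Set.Icc (-1:ℝ) 1, f s = f t := by
  have hweighted_zero : ∀ t ∈ Icc (-1 : ℝ) 1, (1 - t ^ 2) ^ 2 * f' t = 0 := by
    intro t ht
    have hconst := is_const_Icc_of_hasDerivAt_zero_Ioo (g := fun s ↦ (1 - s ^ 2) ^ 2 * f' s)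
      ((continuous_const.sub (continuous_pow 2)).pow 2 |>.continuousOn.mul hf'cont)
      (fun s hs ↦ by simpa [hode s hs] using hasDerivAt_one_sub_sq_sq_mul (hf' s hs))
      ht (right_mem_Icc.2 (by norm_num))
    simpa using hconst
  have hf'_zero : ∀ t ∈ Ioo (-1 : ℝ) 1, f' t = 0 := by
    intro t ht
    have hpos : 0 < 1 - t ^ 2 := by nlinarith [ht.1, ht.2]
    simpa [hpos.ne'] using hweighted_zero t (Ioo_subset_Icc_self ht)
  intro s hs t ht
  refine is_const_Icc_of_hasDerivAt_zero_Ioo (fun x hx ↦ (hf x hx).continuousAt.continuousWithinAt)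
    (fun x hx ↦ ?_) hs ht
  simpa [hf'_zero x hx] using hf x (Ioo_subset_Icc_self hx)
end

section
/- The function u(x, y, t) = log(1 − t²) − 2·log(y), defined on the region {(x,y,t) ∈ ℝ³ : y > 0, −1 < t < 1}, satisfies the SU(∞)-Toda (Boyer–Finley) equation u_xx + u_yy + (e^u)_tt = 0. -/
/-!
The `x`-term vanishes since `u` does not depend on `x`, and `(−2 log y)'' = 2 / y²`. On the open
interval `|t| < 1` we have `e^u = (1 − t²) / y²`, so, second derivatives depending only on the germ,
the `t`-term is `−2 / y²`.
-/

open Real Filter Topology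

lemma exp_log_sub_two_mul_log {s y : ℝ} (hs : 0 < s) (hy : 0 < y) :
    exp (log s - 2 * log y) = s / y ^ 2 := by
  rw [exp_sub, exp_log hs, ← log_rpow hy, exp_log (by positivity)]
  norm_cast

lemma deriv_deriv_const_sub_two_mul_log (c : ℝ) :
    deriv (deriv fun y => c - 2 * log y) = fun y => 2 / y ^ 2 := by
  funext y
  simp [div_eq_mul_inv]

lemma deriv_deriv_sub_sq_div_const (a c : ℝ) :
    deriv (deriv fun t : ℝ => (a - t ^ 2) / c) = fun _ => -2 / c := by
  simp_rw [div_eq_inv_mul, deriv_const_mul_field']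
  funext t
  simp

/-- The canonical model `u(x,y,t) = log(1−t²) − 2 log y` solves the SU(∞)-Toda
(Boyer–Finley) equation `u_xx + u_yy + (e^u)_tt = 0` on `{y > 0, −1 < t < 1}`. -/
theorem stmt_8 (u : ℝ → ℝ → ℝ → ℝ)
    (hu : ∀ x y t : ℝ, u x y t = Real.log (1 - t ^ 2) - 2 * Real.log y) :
    ∀ x y t : ℝ, 0 < y → -1 < t → t < 1 →
      deriv (deriv (fun x' => u x' y t)) x
      + deriv (deriv (fun y' => u x y' t)) y
      + deriv (deriv (fun t' => Real.exp (u x y t'))) t = 0 := by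
  intro x y t hy ht₁ ht₂
  have hxx : deriv (deriv fun x' => u x' y t) x = 0 := by
    simp [hu]
  have hyy : deriv (deriv fun y' => u x y' t) y = 2 / y ^ 2 := by
    simp only [hu, deriv_deriv_const_sub_two_mul_log]
  have hexp : (fun t' => exp (u x y t')) =ᶠ[𝓝 t] fun t' => (1 - t' ^ 2) / y ^ 2 := by
    filter_upwards [Ioo_mem_nhds ht₁ ht₂] with s ⟨hs₁, hs₂⟩
    rw [hu, exp_log_sub_two_mul_log (by nlinarith) hy]
  have htt : deriv (deriv fun t' => exp (u x y t')) t = -2 / y ^ 2 := by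
    rw [hexp.deriv.deriv_eq, deriv_deriv_sub_sq_div_const]
  rw [hxx, hyy, htt]
  ring
end
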